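/- arXiv:1310.0204 — 4 statements merged into one kernel-verified Lean document; each statement's English description precedes it below -/
import Mathlib

section
/- Let σ ≥ 2 and N ≥ 3 be integers, and let h ≥ 0, r ≥ 0 be integers such that (N − 1)·r + 2·N·h < 2σ − 2 + 2N (strictly below the line L^σ_N) and (N + 1)·r + 4·(N + 1)·h > 4·(N + σ) (strictly above the line U^σ_{N+1}). Then there do not exist a finite group G of order at least 2 and a function g : Fin r → G with g j ≠ 1 for all j such that σ − 1 = |G|·(h − 1 + r/2 − (1/2)·∑_j 1/orderOf(g j)) holds in ℚ. -/
/-!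
Writing `m = |G|`, every period satisfies `2 ≤ n_j ≤ m`, so `r / m ≤ ∑ 1/n_j ≤ r / 2`. Fed into
Riemann–Hurwitz, these two bounds say that a point `(h, r)` realized by a group of order `m` lies on
or above `L^σ_m` and on or below `U^σ_m`. In the relevant range of `(h, r)`, the half-plane above
`L^σ_m` grows with `m` and the one below `U^σ_m` shrinks, so lying strictly below `L^σ_N` forces
`m > N` and lying strictly above `U^σ_{N+1}` forces `m < N + 1`.
-/

open Finset

section Periods

variable {G ι : Type*} [Fintype ι]

-- Elements of infinite order have `orderOf = 0`, and then `1 / 0 = 0`.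
theorem one_div_orderOf_le_half [Monoid G] {x : G} (hx : x ≠ 1) :
    (1 : ℚ) / orderOf x ≤ 1 / 2 := by
  rcases Nat.eq_zero_or_pos (orderOf x) with h0 | hpos
  · simp [h0]
  · have h2 : 2 ≤ orderOf x := by
      have : orderOf x ≠ 1 := fun h1 => hx (orderOf_eq_one_iff.mp h1)
      omega
    gcongr
    exact_mod_cast h2

theorem sum_one_div_orderOf_le [Monoid G] (g : ι → G) (hg : ∀ j, g j ≠ 1) :
    ∑ j, (1 : ℚ) / orderOf (g j) ≤ Fintype.card ι / 2 := by
  calc ∑ j, (1 : ℚ) / orderOf (g j) ≤ (univ : Finset ι).card • (1 / 2 : ℚ) :=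
        sum_le_card_nsmul _ _ _ fun j _ => one_div_orderOf_le_half (hg j)
    _ = Fintype.card ι / 2 := by simp only [card_univ, nsmul_eq_mul]; ring

theorem card_div_card_le_sum_one_div_orderOf [Group G] [Fintype G] (g : ι → G) :
    (Fintype.card ι : ℚ) / Fintype.card G ≤ ∑ j, (1 : ℚ) / orderOf (g j) := by
  calc (Fintype.card ι : ℚ) / Fintype.card G
        = (univ : Finset ι).card • (1 / Fintype.card G : ℚ) := by
          simp only [card_univ, nsmul_eq_mul]; ring
    _ ≤ ∑ j, (1 : ℚ) / orderOf (g j) :=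
        card_nsmul_le_sum _ _ _ fun j _ => by
          gcongr
          · exact_mod_cast orderOf_pos (g j)
          · exact orderOf_le_card_univ

end Periods

section RiemannHurwitz

variable {G : Type*} [Group G] [Fintype G] {σ h r : ℕ} (g : Fin r → G)

theorem riemannHurwitz_below_upperLine (hg : ∀ j, g j ≠ 1)
    (hRH : (σ : ℚ) - 1 = (Fintype.card G : ℚ) * ((h : ℚ) - 1 + (r : ℚ) / 2 -
      (1 / 2) * ∑ j, (1 : ℚ) / (orderOf (g j) : ℚ))) :
    (Fintype.card G : ℚ) * (r + 4 * h - 4) ≤ 4 * ((σ : ℚ) - 1) := by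
  have hS := sum_one_div_orderOf_le g hg
  rw [Fintype.card_fin] at hS
  have hm : (0 : ℚ) ≤ Fintype.card G := by positivity
  rw [hRH]
  nlinarith

theorem riemannHurwitz_above_lowerLine
    (hRH : (σ : ℚ) - 1 = (Fintype.card G : ℚ) * ((h : ℚ) - 1 + (r : ℚ) / 2 -
      (1 / 2) * ∑ j, (1 : ℚ) / (orderOf (g j) : ℚ))) :
    2 * ((σ : ℚ) - 1) ≤ Fintype.card G * (r + 2 * h - 2) - r := by
  have hS := card_div_card_le_sum_one_div_orderOf g
  have hm : (0 : ℚ) < Fintype.card G := by exact_mod_cast Fintype.card_pos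
  rw [Fintype.card_fin, div_le_iff₀ hm] at hS
  rw [hRH]
  nlinarith

end RiemannHurwitz

section Lines

variable {R : Type*} [CommRing R] [LinearOrder R] [IsStrictOrderedRing R] {σ m N h r : R}

theorem lt_of_above_lowerLine_of_below_lowerLine (hσ : 1 ≤ σ) (hm : 0 < m) (hr : 0 ≤ r)
    (hL : 2 * (σ - 1) ≤ m * (r + 2 * h - 2) - r)
    (hbelow : (N - 1) * r + 2 * N * h < 2 * σ - 2 + 2 * N) :
    N < m := by
  have hslope : 0 ≤ r + 2 * h - 2 := by
    by_contra! hneg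
    nlinarith
  by_contra! hmN
  nlinarith [mul_le_mul_of_nonneg_right hmN hslope]

theorem lt_of_below_upperLine_of_above_upperLine (hσ : 1 ≤ σ) (hN : 0 ≤ N)
    (hU : m * (r + 4 * h - 4) ≤ 4 * (σ - 1))
    (habove : (N + 1) * r + 4 * (N + 1) * h > 4 * (N + σ)) :
    m < N + 1 := by
  have hslope : 0 < r + 4 * h - 4 := by
    by_contra! hnonpos
    nlinarith
  by_contra! hNm
  nlinarith [mul_le_mul_of_nonneg_right hNm hslope.le]

end Lines

theorem gap_N_Nplus1_general
    (σ N h r : ℕ) (hσ : 2 ≤ σ)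
    (hbelow : ((N : ℤ) - 1) * (r : ℤ) + 2 * (N : ℤ) * (h : ℤ) < 2 * (σ : ℤ) - 2 + 2 * (N : ℤ))
    (habove : ((N : ℤ) + 1) * (r : ℤ) + 4 * ((N : ℤ) + 1) * (h : ℤ) > 4 * ((N : ℤ) + (σ : ℤ))) :
    ¬ ∃ (G : Type) (_ : Group G) (_ : Fintype G) (g : Fin r → G),
      2 ≤ Fintype.card G ∧ (∀ j, g j ≠ 1) ∧
      (σ : ℚ) - 1 =
        (Fintype.card G : ℚ) * ((h : ℚ) - 1 + (r : ℚ) / 2 -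
          (1 / 2) * ∑ j, (1 : ℚ) / (orderOf (g j) : ℚ)) := by
  rintro ⟨G, _, _, g, -, hg, hRH⟩
  have hσ' : (1 : ℚ) ≤ σ := by exact_mod_cast (by omega : 1 ≤ σ)
  have hbelowQ : ((N : ℚ) - 1) * r + 2 * N * h < 2 * σ - 2 + 2 * N := by exact_mod_cast hbelow
  have haboveQ : ((N : ℚ) + 1) * r + 4 * (N + 1) * h > 4 * (N + σ) := by exact_mod_cast habove
  have hgt : (N : ℚ) < Fintype.card G :=
    lt_of_above_lowerLine_of_below_lowerLine hσ' (by exact_mod_cast Fintype.card_pos)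
      (Nat.cast_nonneg r) (riemannHurwitz_above_lowerLine g hRH) hbelowQ
  have hlt : (Fintype.card G : ℚ) < N + 1 :=
    lt_of_below_upperLine_of_above_upperLine hσ' (Nat.cast_nonneg N)
      (riemannHurwitz_below_upperLine g hg hRH) haboveQ
  have hgtN : N < Fintype.card G := by exact_mod_cast hgt
  have hltN : Fintype.card G < N + 1 := by exact_mod_cast hlt
  omega

/-- The gap `𝒢_σ(N, N+1)`: no point strictly between the lower line `L^σ_N` and the upper
line `U^σ_{N+1}` is realized by a group action satisfying the Riemann–Hurwitz formula. -/
theorem gap_N_Nplus1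
    (σ N h r : ℕ) (hσ : 2 ≤ σ) (hN : 3 ≤ N)
    (hbelow : ((N : ℤ) - 1) * (r : ℤ) + 2 * (N : ℤ) * (h : ℤ) < 2 * (σ : ℤ) - 2 + 2 * (N : ℤ))
    (habove : ((N : ℤ) + 1) * (r : ℤ) + 4 * ((N : ℤ) + 1) * (h : ℤ) > 4 * ((N : ℤ) + (σ : ℤ))) :
    ¬ ∃ (G : Type) (_ : Group G) (_ : Fintype G) (g : Fin r → G),
      2 ≤ Fintype.card G ∧ (∀ j, g j ≠ 1) ∧
      (σ : ℚ) - 1 =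
        (Fintype.card G : ℚ) * ((h : ℚ) - 1 + (r : ℚ) / 2 -
          (1 / 2) * ∑ j, (1 : ℚ) / (orderOf (g j) : ℚ)) :=
  gap_N_Nplus1_general σ N h r hσ hbelow habove
end

section
/- Let σ ≥ 2 and N ≥ 3 be integers with p := N + 1 prime, and let h ≥ 0, r ≥ 0 be integers such that (N − 1)·r + 2·N·h < 2σ − 2 + 2N (strictly below L^σ_N), (N + 2)·r + 4·(N + 2)·h > 4·(N + 1 + σ) (strictly above U^σ_{N+2}), and 2·p·h + (p − 1)·r ≠ 2p − 2 + 2σ (off the line L_σ(p,1)). Then there do not exist a finite group G of order at least 2 and a function g : Fin r → G with g j ≠ 1 for all j such that σ − 1 = |G|·(h − 1 + r/2 − (1/2)·∑_j 1/orderOf(g j)) holds in ℚ. -/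
/-!
Write `c = |G|` and `S = ∑ 1/n_j`. Since every `n_j` divides `c` and is at least `2`, we have
`r/c ≤ S ≤ r/2`. Feeding `S ≤ r/2` into Riemann–Hurwitz shows that a point strictly above
`U^σ_{N+2}` forces `c < N + 2`, and feeding `r ≤ cS` shows that a point strictly below `L^σ_N`
forces `c > N`. Hence `c = N + 1` is prime, so `G ≅ C_{N+1}` and the signature lies on
`L_σ(N+1, 1)`.
-/

section OrderBounds

variable {G ι : Type*} [Group G] [Fintype G] [Fintype ι] (g : ι → G)

theorem two_le_orderOf_of_ne_one {x : G} (hx : x ≠ 1) : 2 ≤ orderOf x := by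
  have h₀ := orderOf_pos x
  have h₁ : orderOf x ≠ 1 := mt orderOf_eq_one_iff.mp hx
  omega

theorem sum_inv_orderOf_le_half (hg : ∀ j, g j ≠ 1) :
    ∑ j, (1 : ℚ) / orderOf (g j) ≤ Fintype.card ι / 2 := by
  have hle : ∀ j ∈ Finset.univ, (1 : ℚ) / orderOf (g j) ≤ 1 / 2 := fun j _ =>
    one_div_le_one_div_of_le two_pos (by exact_mod_cast two_le_orderOf_of_ne_one (hg j))
  simpa [div_eq_mul_inv] using Finset.sum_le_card_nsmul _ _ _ hle

theorem card_le_card_mul_sum_inv_orderOf :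
    (Fintype.card ι : ℚ) ≤ Fintype.card G * ∑ j, (1 : ℚ) / orderOf (g j) := by
  have hG : (0 : ℚ) < Fintype.card G := by exact_mod_cast Fintype.card_pos
  have hle : ∀ j ∈ Finset.univ, (1 : ℚ) / Fintype.card G ≤ 1 / orderOf (g j) := fun j _ =>
    one_div_le_one_div_of_le (by exact_mod_cast orderOf_pos (g j))
      (by exact_mod_cast orderOf_le_card_univ)
  have hsum := Finset.card_nsmul_le_sum _ _ _ hle
  rwa [Finset.card_univ, nsmul_eq_mul, mul_one_div, div_le_iff₀ hG, mul_comm] at hsum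

theorem sum_inv_orderOf_of_card_prime (hp : (Fintype.card G).Prime) (hg : ∀ j, g j ≠ 1) :
    ∑ j, (1 : ℚ) / orderOf (g j) = Fintype.card ι / Fintype.card G := by
  have := Fact.mk hp
  have horder : ∀ j, orderOf (g j) = Fintype.card G := fun j =>
    orderOf_eq_prime pow_card_eq_one (hg j)
  simp [horder, div_eq_mul_inv]

end OrderBounds

section RiemannHurwitz

variable {K : Type*} [Field K] [LinearOrder K] [IsStrictOrderedRing K] {σ c h r S : K}

theorem lt_of_riemannHurwitz_of_above_upperLine {M : K}
    (hRH : σ - 1 = c * (h - 1 + r / 2 - S / 2)) (hc : 0 < c) (hσ : 1 ≤ σ) (hS : S ≤ r / 2)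
    (hM : 0 < M) (habove : 4 * (M + σ - 1) < M * r + 4 * M * h) : c < M := by
  have hx : σ - 1 < M * (h - 1 + r / 4) := by linarith
  have hx_pos : 0 < h - 1 + r / 4 := pos_of_mul_pos_right (by linarith) hM.le
  have hcx : c * (h - 1 + r / 4) ≤ σ - 1 := by
    rw [hRH]
    exact mul_le_mul_of_nonneg_left (by linarith) hc.le
  exact lt_of_mul_lt_mul_right (hcx.trans_lt hx) hx_pos.le

theorem lt_of_riemannHurwitz_of_below_lowerLine {N : K}
    (hRH : σ - 1 = c * (h - 1 + r / 2 - S / 2)) (hc : 0 < c) (hσ : 1 ≤ σ) (hr : 0 ≤ r)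
    (hS : r ≤ c * S) (hbelow : (N - 1) * r + 2 * N * h < 2 * σ - 2 + 2 * N) : N < c := by
  by_contra! hcN
  have hcx : c * (h - 1 + r / 2) = σ - 1 + c * S / 2 := by rw [hRH]; ring
  have hx : 0 ≤ h - 1 + r / 2 := nonneg_of_mul_nonneg_right (by linarith) hc
  linarith [mul_le_mul_of_nonneg_right hcN hx]

/-- Here `S = r / p`: in a group of prime order `p` every period equals `p`. -/
theorem eq_of_riemannHurwitz_prime {p : K} (hp : p ≠ 0)
    (hRH : σ - 1 = p * (h - 1 + r / 2 - r / p / 2)) :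
    2 * p * h + (p - 1) * r = 2 * p - 2 + 2 * σ := by
  have hσ : σ = 1 + p * (h - 1 + r / 2 - r / p / 2) := by linarith
  rw [hσ]
  field_simp
  ring

end RiemannHurwitz

theorem gap_N_Nplus2_prime_general
    (σ N h r : ℕ) (hσ : 2 ≤ σ) (hp : Nat.Prime (N + 1))
    (hbelow : ((N : ℤ) - 1) * (r : ℤ) + 2 * (N : ℤ) * (h : ℤ) < 2 * (σ : ℤ) - 2 + 2 * (N : ℤ))
    (habove : ((N : ℤ) + 2) * (r : ℤ) + 4 * ((N : ℤ) + 2) * (h : ℤ) >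
      4 * ((N : ℤ) + 1 + (σ : ℤ)))
    (hoffline : 2 * ((N : ℤ) + 1) * (h : ℤ) + (((N : ℤ) + 1) - 1) * (r : ℤ) ≠
      2 * ((N : ℤ) + 1) - 2 + 2 * (σ : ℤ)) :
    ¬ ∃ (G : Type) (_ : Group G) (_ : Fintype G) (g : Fin r → G),
      2 ≤ Fintype.card G ∧ (∀ j, g j ≠ 1) ∧
      (σ : ℚ) - 1 =
        (Fintype.card G : ℚ) * ((h : ℚ) - 1 + (r : ℚ) / 2 -
          (1 / 2) * ∑ j, (1 : ℚ) / (orderOf (g j) : ℚ)) := by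
  rintro ⟨G, _, _, g, -, hg, hRH⟩
  rw [one_div_mul_eq_div] at hRH
  have hc : (0 : ℚ) < Fintype.card G := by exact_mod_cast Fintype.card_pos
  have hσ' : (1 : ℚ) ≤ σ := by exact_mod_cast hσ.trans' one_le_two
  have hlt : (Fintype.card G : ℚ) < N + 2 := by
    refine lt_of_riemannHurwitz_of_above_upperLine hRH hc hσ' ?_ (by positivity) ?_
    · simpa using sum_inv_orderOf_le_half g hg
    · have : (4 * (N + 1 + σ) : ℚ) < (N + 2) * r + 4 * (N + 2) * h := by exact_mod_cast habove
      linarith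
  have hgt : (N : ℚ) < Fintype.card G := by
    refine lt_of_riemannHurwitz_of_below_lowerLine hRH hc hσ' (by positivity) ?_
      (by exact_mod_cast hbelow)
    simpa using card_le_card_mul_sum_inv_orderOf g
  have hcard : Fintype.card G = N + 1 := by
    have : Fintype.card G < N + 2 := by exact_mod_cast hlt
    have : N < Fintype.card G := by exact_mod_cast hgt
    omega
  rw [sum_inv_orderOf_of_card_prime g (hcard ▸ hp) hg, hcard, Fintype.card_fin] at hRH
  push_cast at hRH
  have hline : 2 * ((N : ℚ) + 1) * h + ((N + 1) - 1) * r = 2 * (N + 1) - 2 + 2 * σ :=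
    eq_of_riemannHurwitz_prime (by positivity) hRH
  exact hoffline (by exact_mod_cast hline)

/-- The gap `𝒢_σ(N, N+2)` when `N + 1` is prime: no point strictly between the lower line
`L^σ_N` and the upper line `U^σ_{N+2}` and off the line `L_σ(N+1, 1)` is realized by a
group action satisfying the Riemann–Hurwitz formula. -/
theorem gap_N_Nplus2_prime
    (σ N h r : ℕ) (hσ : 2 ≤ σ) (hN : 3 ≤ N) (hp : Nat.Prime (N + 1))
    (hbelow : ((N : ℤ) - 1) * (r : ℤ) + 2 * (N : ℤ) * (h : ℤ) < 2 * (σ : ℤ) - 2 + 2 * (N : ℤ))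
    (habove : ((N : ℤ) + 2) * (r : ℤ) + 4 * ((N : ℤ) + 2) * (h : ℤ) >
      4 * ((N : ℤ) + 1 + (σ : ℤ)))
    (hoffline : 2 * ((N : ℤ) + 1) * (h : ℤ) + (((N : ℤ) + 1) - 1) * (r : ℤ) ≠
      2 * ((N : ℤ) + 1) - 2 + 2 * (σ : ℤ)) :
    ¬ ∃ (G : Type) (_ : Group G) (_ : Fintype G) (g : Fin r → G),
      2 ≤ Fintype.card G ∧ (∀ j, g j ≠ 1) ∧
      (σ : ℚ) - 1 =
        (Fintype.card G : ℚ) * ((h : ℚ) - 1 + (r : ℚ) / 2 -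
          (1 / 2) * ∑ j, (1 : ℚ) / (orderOf (g j) : ℚ)) :=
  gap_N_Nplus2_prime_general σ N h r hσ hp hbelow habove hoffline
end

section
/- Let n ≥ 2 be an even integer and let G be a finite group of order 2n. Then the commutator subgroup of G contains no element of order n; in particular, for all a, b ∈ G, the commutator ⁅a, b⁆ does not have order n, and no product of commutators in G has order n. -/
open scoped commutatorElement

/-!
Suppose `c ∈ G'` has order `n`. Then `⟨c⟩` has index 2, hence is normal, and so its subgroup
`⟨c²⟩` is normal too, of index 4. A group of order 4 is abelian, so `G' ≤ ⟨c²⟩`, putting `c` in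
`⟨c²⟩`. But then `c^(2k-1) = 1` for some `k`, so the even number `n` divides an odd one.
-/

open Subgroup

variable {G : Type*} [Group G]

theorem Subgroup.Normal.zpowers_pow {c : G} (hc : (zpowers c).Normal) (k : ℕ) :
    (zpowers (c ^ k)).Normal where
  conj_mem x hx g := by
    obtain ⟨i, rfl⟩ := hx
    obtain ⟨j, hj⟩ := hc.conj_mem c (mem_zpowers c) g
    -- conjugation by `g` sends `c` to some `c ^ j`, hence `(c ^ k) ^ i` to `(c ^ k) ^ (j * i)`
    refine ⟨j * i, ?_⟩
    simp only at hj ⊢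
    rw [← conj_zpow, ← conj_pow, ← hj, ← zpow_natCast, ← zpow_natCast, ← zpow_mul, ← zpow_mul,
      ← zpow_mul, mul_left_comm]

theorem commutator_le_of_card_quotient_eq_prime_sq {N : Subgroup G} [N.Normal] {p : ℕ}
    [Fact p.Prime] (h : Nat.card (G ⧸ N) = p ^ 2) : commutator G ≤ N :=
  Normal.quotient_commutative_iff_commutator_le.mp
    (IsPGroup.isMulCommutative_of_card_eq_prime_sq h)

theorem notMem_zpowers_sq_of_even_orderOf {c : G} (h : Even (orderOf c)) :
    c ∉ zpowers (c ^ 2) := by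
  rintro ⟨k, hk⟩
  have hk' : c ^ (2 * k) = c := by
    simp only at hk
    rwa [← zpow_natCast, ← zpow_mul] at hk
  have hone : c ^ (2 * k - 1) = 1 := by rw [zpow_sub_one, hk', mul_inv_cancel]
  have hdvd : (2 : ℤ) ∣ 2 * k - 1 :=
    (Int.natCast_dvd_natCast.mpr (even_iff_two_dvd.mp h)).trans
      (orderOf_dvd_iff_zpow_eq_one.mpr hone)
  omega

theorem commutator_le_zpowers_sq [Finite G] {c : G} (hc : (zpowers c).index = 2)
    (he : Even (orderOf c)) : commutator G ≤ zpowers (c ^ 2) := by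
  have : (zpowers (c ^ 2)).Normal := (normal_of_index_eq_two hc).zpowers_pow 2
  obtain ⟨m, hm⟩ := he
  have hm0 : 0 < m := by have := orderOf_pos c; omega
  have hc2 : orderOf (c ^ 2) = m := by
    rw [orderOf_pow_of_dvd two_ne_zero ⟨m, by omega⟩, hm]
    omega
  have hcardG : 2 * (m + m) = Nat.card G := by
    rw [← hc, ← hm, ← Nat.card_zpowers]
    exact (zpowers c).index_mul_card
  have hindex : (zpowers (c ^ 2)).index * m = Nat.card G := by
    rw [← hc2, ← Nat.card_zpowers]
    exact (zpowers (c ^ 2)).index_mul_card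
  have hquot : Nat.card (G ⧸ zpowers (c ^ 2)) = 2 ^ 2 := by
    change (zpowers (c ^ 2)).index = 4
    exact Nat.eq_of_mul_eq_mul_right hm0 (by omega)
  exact commutator_le_of_card_quotient_eq_prime_sq hquot

theorem notMem_commutator_of_orderOf_eq [Finite G] {n : ℕ} (hG : Nat.card G = 2 * n)
    (hn : Even n) {c : G} (hc : orderOf c = n) : c ∉ commutator G := by
  have hindex : (zpowers c).index = 2 := by
    have := (zpowers c).index_mul_card
    rw [Nat.card_zpowers, hc, hG] at this
    exact Nat.eq_of_mul_eq_mul_right (hc ▸ orderOf_pos c) this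
  exact fun hmem => notMem_zpowers_sq_of_even_orderOf (hc ▸ hn)
    (commutator_le_zpowers_sq hindex (hc ▸ hn) hmem)

theorem commutatorElement_mem_commutator (a b : G) : ⁅a, b⁆ ∈ commutator G :=
  commutator_mem_commutator (mem_top a) (mem_top b)

theorem commutator_subgroup_no_element_of_order_n_general
    (n : ℕ) (hne : Even n) (G : Type) [Group G] [Fintype G]
    (hG : Fintype.card G = 2 * n) :
    (∀ c ∈ commutator G, orderOf c ≠ n) ∧
    (∀ a b : G, orderOf ⁅a, b⁆ ≠ n) ∧
    (∀ l : List G, (∀ x ∈ l, ∃ a b : G, x = ⁅a, b⁆) → orderOf l.prod ≠ n) := by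
  have hmem : ∀ c ∈ commutator G, orderOf c ≠ n := fun c hc hoc =>
    notMem_commutator_of_orderOf_eq (Nat.card_eq_fintype_card.trans hG) hne hoc hc
  refine ⟨hmem, fun a b => hmem _ (commutatorElement_mem_commutator a b), fun l hl => hmem _ ?_⟩
  refine Subgroup.list_prod_mem _ fun x hx => ?_
  obtain ⟨a, b, rfl⟩ := hl x hx
  exact commutatorElement_mem_commutator a b

/-- For even `n ≥ 2`, a group of order `2n` has no element of order `n` in its commutator
subgroup; in particular no commutator, and no product of commutators, has order `n`. -/
theorem commutator_subgroup_no_element_of_order_n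
    (n : ℕ) (hn : 2 ≤ n) (hne : Even n) (G : Type) [Group G] [Fintype G]
    (hG : Fintype.card G = 2 * n) :
    (∀ c ∈ commutator G, orderOf c ≠ n) ∧
    (∀ a b : G, orderOf ⁅a, b⁆ ≠ n) ∧
    (∀ l : List G, (∀ x ∈ l, ∃ a b : G, x = ⁅a, b⁆) → orderOf l.prod ≠ n) :=
  commutator_subgroup_no_element_of_order_n_general n hne G hG
end

section
/- For all integers n ≥ 2 and h ≥ 1, setting σ = 2n·(2(h−1) + 1) − 1 = 2n(2h−1) − 1, there exist a finite group G with |G| = 4n, functions a, b : Fin h → G, and c ∈ G such that the subgroup generated by the ranges of a and b together with c is all of G, orderOf c = n, (∏_{i} ⁅a i, b i⁆) · c = 1, and the Riemann–Hurwitz condition 2·n·(σ − 1) = |G| · (n·(2h − 1) − 1) holds. -/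
open scoped commutatorElement

/-!
The witness is the generalized quaternion group `Q₄ₙ = ⟨x, a | a²ⁿ = 1, x² = aⁿ, x a x⁻¹ = a⁻¹⟩`.
Since `x` inverts `a`, the commutator `⁅x, a⁆ = a⁻²` has order `n`, so `(x, a, 1, 1, …, 1, 1; a²)`
is an `(h; n)`-generating vector; the Riemann–Hurwitz identity is then arithmetic.
-/

namespace QuaternionGroup

variable {n : ℕ}

theorem natCast_add_self : (n + n : ZMod (2 * n)) = 0 := by
  rw [← two_mul]
  exact_mod_cast ZMod.natCast_self (2 * n)

theorem commutator_xa_zero_a_one :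
    ⁅(xa 0 : QuaternionGroup n), (a 1 : QuaternionGroup n)⁆ = a (-2) := by
  have hxa : (xa 0 : QuaternionGroup n)⁻¹ = xa (n + 0) := rfl
  have ha : (a 1 : QuaternionGroup n)⁻¹ = a (-1) := rfl
  rw [commutatorElement_def, hxa, ha, xa_mul_a, xa_mul_xa, a_mul_a]
  congr 1
  linear_combination (natCast_add_self (n := n))

theorem orderOf_a_two [NeZero n] : orderOf (a 2 : QuaternionGroup n) = n := by
  rw [orderOf_a, ZMod.val_two_eq_two_mod, Nat.gcd_comm, ← Nat.gcd_rec, Nat.gcd_mul_right_left]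
  have := NeZero.pos n
  omega

theorem closure_xa_zero_a_one [NeZero n] :
    Subgroup.closure {(xa 0 : QuaternionGroup n), a 1} = ⊤ := by
  have hx : xa 0 ∈ Subgroup.closure {(xa 0 : QuaternionGroup n), a 1} :=
    Subgroup.subset_closure (by simp)
  have ha : a 1 ∈ Subgroup.closure {(xa 0 : QuaternionGroup n), a 1} :=
    Subgroup.subset_closure (by simp)
  rw [eq_top_iff]
  rintro (j | j) -
  · rw [← ZMod.natCast_zmod_val j, ← a_one_pow]
    exact pow_mem ha _
  · rw [← zero_add j, ← xa_mul_a, ← ZMod.natCast_zmod_val j, ← a_one_pow]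
    exact mul_mem hx (pow_mem ha _)

end QuaternionGroup

section PaddedGeneratingVector

variable {G : Type*} [Group G] {m : ℕ}

theorem prod_ofFn_commutatorElement_cons_one (x y : G) :
    (List.ofFn fun i : Fin (m + 1) =>
      ⁅(Fin.cons x 1 : Fin (m + 1) → G) i, (Fin.cons y 1 : Fin (m + 1) → G) i⁆).prod = ⁅x, y⁆ := by
  simp [List.ofFn_succ]

theorem closure_range_cons_one_eq_top {x y : G} (hxy : Subgroup.closure {x, y} = ⊤) (c : G) :
    Subgroup.closure (Set.range (Fin.cons x 1 : Fin (m + 1) → G) ∪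
      Set.range (Fin.cons y 1 : Fin (m + 1) → G) ∪ {c}) = ⊤ := by
  refine eq_top_mono (Subgroup.closure_mono ?_) hxy
  rintro z (rfl | rfl) <;> simp [Fin.range_cons]

end PaddedGeneratingVector

open QuaternionGroup in
/-- Existence half of Theorem 4.1 of Anderson–Wootton: for `n ≥ 2` and `h ≥ 1`, with
`σ = 2n(2(h-1)+1) - 1 = 2n(2h-1) - 1`, there is a group of order `4n` (the generalized
quaternion group) with an `(h; n)`-generating vector satisfying the Riemann–Hurwitz
formula; hence `(h, 1)` is a skeletal signature in genus `σ`. -/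
theorem h_one_skeletal_signature_exists
    (n h σ : ℕ) (hn : 2 ≤ n) (hh : 1 ≤ h) (hσ : σ = 2 * n * (2 * (h - 1) + 1) - 1) :
    ∃ (G : Type) (_ : Group G) (_ : Fintype G) (a b : Fin h → G) (c : G),
      Fintype.card G = 4 * n ∧
      Subgroup.closure (Set.range a ∪ Set.range b ∪ {c}) = ⊤ ∧
      orderOf c = n ∧
      (List.ofFn fun i => ⁅a i, b i⁆).prod * c = 1 ∧
      2 * n * (σ - 1) = Fintype.card G * (n * (2 * h - 1) - 1) := by
  have : NeZero n := ⟨by omega⟩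
  obtain ⟨m, rfl⟩ : ∃ m, h = m + 1 := ⟨h - 1, by omega⟩
  refine ⟨QuaternionGroup n, inferInstance, inferInstance, Fin.cons (xa 0) 1, Fin.cons (a 1) 1,
    a 2, card, closure_range_cons_one_eq_top closure_xa_zero_a_one _, orderOf_a_two, ?_, ?_⟩
  · rw [prod_ofFn_commutatorElement_cons_one, commutator_xa_zero_a_one, a_mul_a, neg_add_cancel,
      a_zero]
  · rw [card, hσ, show 2 * (m + 1 - 1) + 1 = 2 * m + 1 by omega,
      show 2 * (m + 1) - 1 = 2 * m + 1 by omega, Nat.mul_assoc 2 n (2 * m + 1),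
      show ∀ k, 2 * k - 1 - 1 = 2 * (k - 1) from fun k => by omega]
    ring
end
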